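/- In a finite network with disjoint nonempty vertex sets S and T, the extremal length of the family of paths from S to T equals the effective resistance between S and T: λ(S↔T;G) = R_eff(S↔T;G). -/

import Mathlib

/-!
Let `h` be the unit potential (`0` on `S`, `1` on `T`, harmonic elsewhere) and `I` the current
it sends out of `S`. Green's identity gives `E(h) = 2I` for the Dirichlet energy `E`, and `h`
minimises `E` among functions with the same boundary values.

For a metric `ρ` with `ℓ = ℓ(ρ, Γ) > 0`, the truncated `ρ`-distance from `S`,
`min 1 (d_ρ(S, ·) / ℓ)`, is `0` on `S`, `1` on `T` and varies by at most `ρ / ℓ` along an edge,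
so `2I ≤ E ≤ 2A(ρ) / ℓ²`, i.e. `ℓ² / A(ρ) ≤ 1 / I`. Conversely, the metric `ρ = |∇h|` makes every
path from `S` to `T` at least `1` long by telescoping, and `A(|∇h|) = I`, so the bound is attained.
-/

open Finset

theorem Fin.sum_succ_sub_castSucc {M : Type*} [AddCommGroup M] {m : ℕ} (f : Fin (m + 1) → M) :
    ∑ i : Fin m, (f i.succ - f i.castSucc) = f (Fin.last m) - f 0 := by
  induction m with
  | zero => simp
  | succ m ih =>
    rw [Fin.sum_univ_castSucc]
    simp only [Fin.succ_castSucc, ih fun i => f i.castSucc, Fin.succ_last]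
    simp

namespace Network

variable {V : Type*}

section Walks

variable {c ρ : V → V → ℝ}

def IsWalk (c : V → V → ℝ) {m : ℕ} (γ : Fin (m + 1) → V) : Prop :=
  ∀ i : Fin m, 0 < c (γ i.castSucc) (γ i.succ)

def walkLength (ρ : V → V → ℝ) {m : ℕ} (γ : Fin (m + 1) → V) : ℝ :=
  ∑ i : Fin m, ρ (γ i.castSucc) (γ i.succ)

/-- The `ρ`-lengths of the walks from `A` to `B`; their infimum is `ℓ(ρ, Γ)`. -/
def walkLengths (c ρ : V → V → ℝ) (A B : Set V) : Set ℝ :=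
  {l | ∃ (m : ℕ) (γ : Fin (m + 1) → V),
    γ 0 ∈ A ∧ γ (Fin.last m) ∈ B ∧ IsWalk c γ ∧ l = walkLength ρ γ}

noncomputable def walkDist (c ρ : V → V → ℝ) (A : Set V) (x : V) : ℝ :=
  sInf (walkLengths c ρ A {x})

theorem IsWalk.snoc {m : ℕ} {γ : Fin (m + 1) → V} {z : V} (hγ : IsWalk c γ)
    (hz : 0 < c (γ (Fin.last m)) z) : IsWalk c (Fin.snoc (α := fun _ => V) γ z) := by
  intro i
  induction i using Fin.lastCases with
  | last => simpa only [Fin.succ_last, Fin.snoc_last, Fin.snoc_castSucc] using hz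
  | cast j => simpa only [Fin.succ_castSucc, Fin.snoc_castSucc] using hγ j

theorem walkLength_snoc {m : ℕ} (γ : Fin (m + 1) → V) (z : V) :
    walkLength ρ (Fin.snoc (α := fun _ => V) γ z) = walkLength ρ γ + ρ (γ (Fin.last m)) z := by
  simp only [walkLength, Fin.sum_univ_castSucc, Fin.succ_castSucc, Fin.snoc_castSucc,
    Fin.succ_last, Fin.snoc_last]

theorem exists_isWalk_of_reflTransGen {x y : V}
    (hxy : Relation.ReflTransGen (fun u v => 0 < c u v) x y) :
    ∃ (m : ℕ) (γ : Fin (m + 1) → V), γ 0 = x ∧ γ (Fin.last m) = y ∧ IsWalk c γ := by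
  induction hxy with
  | refl => exact ⟨0, fun _ => x, rfl, rfl, fun i => i.elim0⟩
  | tail _ hyz ih =>
    obtain ⟨m, γ, h0, hl, hγ⟩ := ih
    exact ⟨m + 1, Fin.snoc γ _, by simpa using h0, Fin.snoc_last .., hγ.snoc (hl ▸ hyz)⟩

theorem exists_ne_of_isWalk {m : ℕ} {γ : Fin (m + 1) → V} (hγ : IsWalk c γ) {f : V → ℝ}
    (hf : f (γ 0) ≠ f (γ (Fin.last m))) : ∃ x y, 0 < c x y ∧ f x ≠ f y := by
  by_contra! hcon
  have := Fin.sum_succ_sub_castSucc fun i => f (γ i)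
  rw [sum_eq_zero fun i _ => sub_eq_zero.mpr (hcon _ _ (hγ i)).symm] at this
  exact hf (sub_eq_zero.mp this.symm).symm

theorem walkLengths_nonempty (hconn : ∀ x y : V, Relation.ReflTransGen (fun u v => 0 < c u v) x y)
    {A B : Set V} (hA : A.Nonempty) (hB : B.Nonempty) : (walkLengths c ρ A B).Nonempty := by
  obtain ⟨a, ha⟩ := hA
  obtain ⟨b, hb⟩ := hB
  obtain ⟨m, γ, h0, hl, hγ⟩ := exists_isWalk_of_reflTransGen (hconn a b)
  exact ⟨_, m, γ, h0 ▸ ha, hl ▸ hb, hγ, rfl⟩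

theorem walkLengths_mono {A B B' : Set V} (hB : B ⊆ B') :
    walkLengths c ρ A B ⊆ walkLengths c ρ A B' := by
  rintro l ⟨m, γ, h0, hl, hγ, rfl⟩
  exact ⟨m, γ, h0, hB hl, hγ, rfl⟩

theorem nonneg_of_mem_walkLengths (hρ : ∀ x y, 0 ≤ ρ x y) {A B : Set V} {l : ℝ}
    (hl : l ∈ walkLengths c ρ A B) : 0 ≤ l := by
  obtain ⟨m, γ, -, -, -, rfl⟩ := hl
  exact sum_nonneg fun i _ => hρ _ _

theorem walkDist_eq_zero (hρ : ∀ x y, 0 ≤ ρ x y) {A : Set V} {a : V} (ha : a ∈ A) :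
    walkDist c ρ A a = 0 :=
  le_antisymm (csInf_le ⟨0, fun _ => nonneg_of_mem_walkLengths hρ⟩
    ⟨0, fun _ => a, ha, rfl, fun i => i.elim0, by simp [walkLength]⟩)
    (Real.sInf_nonneg fun _ => nonneg_of_mem_walkLengths hρ)

theorem sInf_walkLengths_le_walkDist (hρ : ∀ x y, 0 ≤ ρ x y) {A B : Set V} {b : V} (hb : b ∈ B)
    (hne : (walkLengths c ρ A {b}).Nonempty) :
    sInf (walkLengths c ρ A B) ≤ walkDist c ρ A b :=
  csInf_le_csInf ⟨0, fun _ => nonneg_of_mem_walkLengths hρ⟩ hne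
    (walkLengths_mono (Set.singleton_subset_iff.mpr hb))

theorem walkDist_le_add (hρ : ∀ x y, 0 ≤ ρ x y) {A : Set V} {x y : V}
    (hne : (walkLengths c ρ A {x}).Nonempty) (hxy : 0 < c x y) :
    walkDist c ρ A y ≤ walkDist c ρ A x + ρ x y := by
  suffices walkDist c ρ A y - ρ x y ≤ walkDist c ρ A x by linarith
  refine le_csInf hne ?_
  rintro _ ⟨m, γ, h0, rfl, hγ, rfl⟩
  have hsnoc : walkLength ρ γ + ρ (γ (Fin.last m)) y ∈ walkLengths c ρ A {y} :=
    ⟨m + 1, Fin.snoc γ y, by simpa using h0, Fin.snoc_last .., hγ.snoc hxy,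
      (walkLength_snoc γ y).symm⟩
  have hle : walkDist c ρ A y ≤ _ := csInf_le ⟨0, fun _ => nonneg_of_mem_walkLengths hρ⟩ hsnoc
  linarith

theorem abs_walkDist_sub_le (hsym : ∀ x y, c x y = c y x) (hρsym : ∀ x y, ρ x y = ρ y x)
    (hρ : ∀ x y, 0 ≤ ρ x y) {A : Set V} (hne : ∀ x, (walkLengths c ρ A {x}).Nonempty)
    {x y : V} (hxy : 0 < c x y) : |walkDist c ρ A y - walkDist c ρ A x| ≤ ρ x y := by
  have hyx := walkDist_le_add hρ (hne y) (hsym x y ▸ hxy)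
  rw [hρsym y x] at hyx
  exact abs_le.mpr ⟨by linarith, by linarith [walkDist_le_add hρ (hne x) hxy]⟩

noncomputable def gradWeight (c : V → V → ℝ) (f : V → ℝ) (x y : V) : ℝ :=
  if c x y = 0 then 0 else |f y - f x|

theorem gradWeight_symm (hsym : ∀ x y, c x y = c y x) (f : V → ℝ) (x y : V) :
    gradWeight c f x y = gradWeight c f y x := by
  simp only [gradWeight, hsym x y, abs_sub_comm]

theorem gradWeight_nonneg (f : V → ℝ) (x y : V) : 0 ≤ gradWeight c f x y := by
  unfold gradWeight
  split_ifs <;> positivity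

theorem gradWeight_of_eq_zero (f : V → ℝ) {x y : V} (hxy : c x y = 0) : gradWeight c f x y = 0 :=
  if_pos hxy

theorem sub_le_walkLength_gradWeight {m : ℕ} {γ : Fin (m + 1) → V} (hγ : IsWalk c γ) (f : V → ℝ) :
    f (γ (Fin.last m)) - f (γ 0) ≤ walkLength (gradWeight c f) γ := by
  rw [← Fin.sum_succ_sub_castSucc fun i => f (γ i)]
  refine sum_le_sum fun i _ => ?_
  rw [gradWeight, if_neg (hγ i).ne']
  exact le_abs_self _

end Walks

section Energy

variable [Fintype V]

/-- `∑ x, ∑ y` counts every edge twice. -/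
def energy (c : V → V → ℝ) (f : V → ℝ) : ℝ := ∑ x, ∑ y, c x y * (f y - f x) ^ 2

def laplacian (c : V → V → ℝ) (f : V → ℝ) (x : V) : ℝ := ∑ y, c x y * (f y - f x)

variable {c : V → V → ℝ}

theorem energy_nonneg (hnn : ∀ x y, 0 ≤ c x y) (f : V → ℝ) : 0 ≤ energy c f :=
  sum_nonneg fun x _ => sum_nonneg fun y _ => mul_nonneg (hnn x y) (sq_nonneg _)

theorem energy_const_mul (a : ℝ) (f : V → ℝ) :
    energy c (fun x => a * f x) = a ^ 2 * energy c f := by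
  simp only [energy, mul_sum]
  exact sum_congr rfl fun x _ => sum_congr rfl fun y _ => by ring

theorem energy_le_of_abs_sub_le (hnn : ∀ x y, 0 ≤ c x y) {f : V → ℝ} {ρ : V → V → ℝ}
    (hf : ∀ x y, 0 < c x y → |f y - f x| ≤ ρ x y) :
    energy c f ≤ ∑ x, ∑ y, c x y * ρ x y ^ 2 := by
  refine sum_le_sum fun x _ => sum_le_sum fun y _ => ?_
  rcases (hnn x y).eq_or_lt with hc | hc
  · simp [← hc]
  · rw [← sq_abs (f y - f x)]
    exact mul_le_mul_of_nonneg_left (pow_le_pow_left₀ (abs_nonneg _) (hf x y hc) 2) hc.le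

theorem sum_sum_mul_sub_mul_sub (hsym : ∀ x y, c x y = c y x) (f u : V → ℝ) :
    ∑ x, ∑ y, c x y * (f y - f x) * (u y - u x) = -2 * ∑ x, u x * laplacian c f x := by
  have hswap : ∑ x, ∑ y, c x y * (f y - f x) * u y = -∑ x, ∑ y, c x y * (f y - f x) * u x := by
    rw [sum_comm, ← sum_neg_distrib]
    refine sum_congr rfl fun x _ => ?_
    rw [← sum_neg_distrib]
    exact sum_congr rfl fun y _ => by rw [hsym y x]; ring
  calc ∑ x, ∑ y, c x y * (f y - f x) * (u y - u x)
      = ∑ x, ∑ y, c x y * (f y - f x) * u y - ∑ x, ∑ y, c x y * (f y - f x) * u x := by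
        simp only [← sum_sub_distrib, mul_sub]
    _ = -2 * ∑ x, u x * laplacian c f x := by
        have hlap : ∑ x, u x * laplacian c f x = ∑ x, ∑ y, c x y * (f y - f x) * u x := by
          simp only [laplacian, mul_sum]
          exact sum_congr rfl fun x _ => sum_congr rfl fun y _ => by ring
        rw [hswap, hlap]
        ring

end Energy

section ExtremalLength

variable [Fintype V] {c : V → V → ℝ}

theorem energy_pos_of_ne (hnn : ∀ x y, 0 ≤ c x y) {f : V → ℝ} {x y : V} (hxy : 0 < c x y)
    (hf : f x ≠ f y) : 0 < energy c f :=
  sum_pos' (fun x _ => sum_nonneg fun y _ => mul_nonneg (hnn x y) (sq_nonneg _))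
    ⟨x, mem_univ _, sum_pos' (fun y _ => mul_nonneg (hnn x y) (sq_nonneg _))
      ⟨y, mem_univ _, mul_pos hxy (pow_two_pos_of_ne_zero (sub_ne_zero.mpr hf.symm))⟩⟩

noncomputable def area (c ρ : V → V → ℝ) : ℝ := (1 / 2) * ∑ x, ∑ y, c x y * ρ x y ^ 2

noncomputable def extremalRatios (c : V → V → ℝ) (A B : Set V) : Set ℝ :=
  {q | ∃ ρ : V → V → ℝ, (∀ x y, ρ x y = ρ y x) ∧ (∀ x y, 0 ≤ ρ x y) ∧
    (∀ x y, c x y = 0 → ρ x y = 0) ∧ ρ ≠ 0 ∧ q = sInf (walkLengths c ρ A B) ^ 2 / area c ρ}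

noncomputable def extremalLength (c : V → V → ℝ) (A B : Set V) : ℝ := sSup (extremalRatios c A B)

theorem area_nonneg (hnn : ∀ x y, 0 ≤ c x y) (ρ : V → V → ℝ) : 0 ≤ area c ρ :=
  mul_nonneg (by norm_num) (sum_nonneg fun x _ => sum_nonneg fun y _ =>
    mul_nonneg (hnn x y) (sq_nonneg _))

theorem area_gradWeight (f : V → ℝ) : area c (gradWeight c f) = energy c f / 2 := by
  rw [area, energy, one_div_mul_eq_div]
  congr 1
  refine sum_congr rfl fun x _ => sum_congr rfl fun y _ => ?_
  by_cases hc : c x y = 0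
  · simp [hc]
  · rw [gradWeight, if_neg hc, sq_abs]

theorem sq_sInf_walkLengths_mul_energy_le (hsym : ∀ x y, c x y = c y x) (hnn : ∀ x y, 0 ≤ c x y)
    (hconn : ∀ x y : V, Relation.ReflTransGen (fun u v => 0 < c u v) x y)
    {ρ : V → V → ℝ} (hρsym : ∀ x y, ρ x y = ρ y x) (hρ : ∀ x y, 0 ≤ ρ x y)
    {A B : Set V} {h : V → ℝ}
    (hmin : ∀ g : V → ℝ, (∀ a ∈ A, g a = 0) → (∀ b ∈ B, g b = 1) → energy c h ≤ energy c g) :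
    sInf (walkLengths c ρ A B) ^ 2 * energy c h ≤ 2 * area c ρ := by
  set ℓ := sInf (walkLengths c ρ A B) with hℓ_def
  have harea : 2 * area c ρ = ∑ x, ∑ y, c x y * ρ x y ^ 2 := by rw [area]; ring
  rw [harea]
  have hℓ0 : 0 ≤ ℓ := Real.sInf_nonneg fun _ => nonneg_of_mem_walkLengths hρ
  rcases hℓ0.eq_or_lt with hℓ | hℓ
  · rw [← hℓ, sq, zero_mul, zero_mul]
    exact sum_nonneg fun x _ => sum_nonneg fun y _ => mul_nonneg (hnn x y) (sq_nonneg _)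
  obtain ⟨-, m, γ, h0, -⟩ : (walkLengths c ρ A B).Nonempty := by
    refine Set.nonempty_iff_ne_empty.mpr fun he => ?_
    rw [hℓ_def, he, Real.sInf_empty] at hℓ
    exact hℓ.false
  have hne x : (walkLengths c ρ A {x}).Nonempty :=
    walkLengths_nonempty hconn ⟨γ 0, h0⟩ (Set.singleton_nonempty x)
  set f : V → ℝ := fun x => min ℓ (walkDist c ρ A x)
  have hf x y (hxy : 0 < c x y) : |f y - f x| ≤ ρ x y :=
    (abs_min_sub_min_le_max _ _ _ _).trans (by
      simpa using abs_walkDist_sub_le hsym hρsym hρ hne hxy)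
  have hg0 : ∀ a ∈ A, ℓ⁻¹ * f a = 0 := fun a ha => by
    simp only [f, walkDist_eq_zero hρ ha, min_eq_right hℓ0, mul_zero]
  have hg1 : ∀ b ∈ B, ℓ⁻¹ * f b = 1 := fun b hb => by
    have hℓb : ℓ ≤ walkDist c ρ A b := sInf_walkLengths_le_walkDist hρ hb (hne b)
    simp only [f, min_eq_left hℓb, inv_mul_cancel₀ hℓ.ne']
  calc ℓ ^ 2 * energy c h ≤ ℓ ^ 2 * energy c (fun x => ℓ⁻¹ * f x) :=
        mul_le_mul_of_nonneg_left (hmin _ hg0 hg1) (sq_nonneg _)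
    _ = energy c f := by
        rw [energy_const_mul, ← mul_assoc, ← mul_pow, mul_inv_cancel₀ hℓ.ne', one_pow, one_mul]
    _ ≤ ∑ x, ∑ y, c x y * ρ x y ^ 2 := energy_le_of_abs_sub_le hnn hf

theorem extremalLength_eq_two_div_energy (hsym : ∀ x y, c x y = c y x) (hnn : ∀ x y, 0 ≤ c x y)
    (hconn : ∀ x y : V, Relation.ReflTransGen (fun u v => 0 < c u v) x y)
    {A B : Set V} (hA : A.Nonempty) (hB : B.Nonempty) {h : V → ℝ}
    (hA0 : ∀ a ∈ A, h a = 0) (hB1 : ∀ b ∈ B, h b = 1)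
    (hmin : ∀ g : V → ℝ, (∀ a ∈ A, g a = 0) → (∀ b ∈ B, g b = 1) → energy c h ≤ energy c g) :
    extremalLength c A B = 2 / energy c h := by
  obtain ⟨a, ha⟩ := hA
  obtain ⟨b, hb⟩ := hB
  have hpos : 0 < energy c h := by
    obtain ⟨m, γ, rfl, rfl, hγ⟩ := exists_isWalk_of_reflTransGen (hconn a b)
    obtain ⟨x, y, hxy, hne⟩ := exists_ne_of_isWalk hγ (f := h) (by rw [hA0 _ ha, hB1 _ hb]; simp)
    exact energy_pos_of_ne hnn hxy hne
  have hub : ∀ q ∈ extremalRatios c A B, q ≤ 2 / energy c h := by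
    rintro _ ⟨ρ, hρsym, hρ, -, -, rfl⟩
    have hmul := sq_sInf_walkLengths_mul_energy_le hsym hnn hconn hρsym hρ hmin
    rcases (area_nonneg hnn ρ).eq_or_lt with harea | harea
    · rw [← harea, div_zero]
      positivity
    · rw [div_le_div_iff₀ harea hpos]
      linarith
  -- The metric `|∇h|` is extremal: by telescoping, every walk from `A` to `B` has length `≥ 1`.
  have hwalk : 1 ≤ sInf (walkLengths c (gradWeight c h) A B) := by
    refine le_csInf (walkLengths_nonempty hconn ⟨a, ha⟩ ⟨b, hb⟩) ?_
    rintro _ ⟨m, γ, h0, hl, hγ, rfl⟩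
    have := sub_le_walkLength_gradWeight hγ h
    rw [hA0 _ h0, hB1 _ hl] at this
    linarith
  have hwit : 2 / energy c h ≤
      sInf (walkLengths c (gradWeight c h) A B) ^ 2 / area c (gradWeight c h) := by
    rw [area_gradWeight, div_div_eq_mul_div, mul_comm]
    exact div_le_div_of_nonneg_right (by nlinarith) hpos.le
  have hne : gradWeight c h ≠ 0 := fun h0 => by
    have harea : area c (gradWeight c h) = 0 := by simp [h0, area]
    linarith [area_gradWeight (c := c) h]
  have hmem : sInf (walkLengths c (gradWeight c h) A B) ^ 2 / area c (gradWeight c h) ∈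
      extremalRatios c A B :=
    ⟨gradWeight c h, gradWeight_symm hsym h, gradWeight_nonneg h,
      fun _ _ => gradWeight_of_eq_zero h, hne, rfl⟩
  exact le_antisymm (csSup_le ⟨_, hmem⟩ hub) (hwit.trans (le_csSup ⟨_, hub⟩ hmem))

end ExtremalLength

section Harmonic

variable [Fintype V] {c : V → V → ℝ} {S T : Finset V} {h : V → ℝ}

theorem energy_eq_two_mul_sum_laplacian (hsym : ∀ x y, c x y = c y x)
    (hS0 : ∀ s ∈ S, h s = 0) (hT1 : ∀ t ∈ T, h t = 1)
    (hharm : ∀ x, x ∉ S → x ∉ T → laplacian c h x = 0) :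
    energy c h = 2 * ∑ s ∈ S, laplacian c h s := by
  have hflux : ∑ s ∈ S, laplacian c h s = ∑ x, (1 - h x) * laplacian c h x := by
    rw [← sum_subset (subset_univ S)]
    · exact sum_congr rfl fun s hs => by rw [hS0 s hs, sub_zero, one_mul]
    · intro x _ hxS
      by_cases hxT : x ∈ T
      · rw [hT1 x hxT, sub_self, zero_mul]
      · rw [hharm x hxS hxT, mul_zero]
  have hgreen := sum_sum_mul_sub_mul_sub hsym h (fun x => 1 - h x)
  have hneg : ∑ x, ∑ y, c x y * (h y - h x) * ((1 - h y) - (1 - h x)) = -energy c h := by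
    simp only [energy, ← sum_neg_distrib]
    exact sum_congr rfl fun x _ => sum_congr rfl fun y _ => by ring
  rw [hflux]
  linarith

theorem energy_le_of_laplacian_eq_zero (hsym : ∀ x y, c x y = c y x) (hnn : ∀ x y, 0 ≤ c x y)
    (hS0 : ∀ s ∈ S, h s = 0) (hT1 : ∀ t ∈ T, h t = 1)
    (hharm : ∀ x, x ∉ S → x ∉ T → laplacian c h x = 0)
    {g : V → ℝ} (hg0 : ∀ s ∈ S, g s = 0) (hg1 : ∀ t ∈ T, g t = 1) :
    energy c h ≤ energy c g := by
  have hcross : ∑ x, ∑ y, c x y * (h y - h x) * ((g y - h y) - (g x - h x)) = 0 := by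
    rw [sum_sum_mul_sub_mul_sub hsym, sum_eq_zero, mul_zero]
    intro x _
    by_cases hxS : x ∈ S
    · rw [hg0 x hxS, hS0 x hxS, sub_self, zero_mul]
    by_cases hxT : x ∈ T
    · rw [hg1 x hxT, hT1 x hxT, sub_self, zero_mul]
    · rw [hharm x hxS hxT, mul_zero]
  calc energy c h ≤ energy c h + energy c (fun x => g x - h x) :=
        le_add_of_nonneg_right (energy_nonneg hnn _)
    _ = energy c h + 2 * ∑ x, ∑ y, c x y * (h y - h x) * ((g y - h y) - (g x - h x))
          + energy c (fun x => g x - h x) := by rw [hcross]; ring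
    _ = energy c g := by
        simp only [energy, mul_sum, ← sum_add_distrib]
        exact sum_congr rfl fun x _ => sum_congr rfl fun y _ => by ring

end Harmonic

end Network

open Network

/-- `R_eff(S ↔ T)` appears as `1 / I`, where `I` is the current that the unit potential `h`
sends out of `S`. -/
theorem stmt_8_general {V : Type*} [Fintype V]
    (c : V → V → ℝ) (hsym : ∀ x y, c x y = c y x) (hnn : ∀ x y, 0 ≤ c x y)
    (hconn : ∀ x y : V, Relation.ReflTransGen (fun u v => 0 < c u v) x y)
    (S T : Finset V) (hS : S.Nonempty) (hT : T.Nonempty)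
    (h : V → ℝ) (hS0 : ∀ s ∈ S, h s = 0) (hT1 : ∀ t ∈ T, h t = 1)
    (hharm : ∀ x, x ∉ S → x ∉ T → ∑ y, c x y * (h y - h x) = 0) :
    sSup {q : ℝ | ∃ ρ : V → V → ℝ, (∀ x y, ρ x y = ρ y x) ∧ (∀ x y, 0 ≤ ρ x y) ∧
        (∀ x y, c x y = 0 → ρ x y = 0) ∧ ρ ≠ 0 ∧
        q = (sInf {l : ℝ | ∃ (m : ℕ) (γ : Fin (m+1) → V), γ 0 ∈ S ∧ γ (Fin.last m) ∈ T ∧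
              (∀ i : Fin m, 0 < c (γ i.castSucc) (γ i.succ)) ∧
              l = ∑ i : Fin m, ρ (γ i.castSucc) (γ i.succ)}) ^ 2
            / ((1/2) * ∑ x, ∑ y, c x y * ρ x y ^ 2)}
      = 1 / (∑ s ∈ S, ∑ y, c s y * (h y - h s)) := by
  have hext : extremalLength c S T = 2 / energy c h :=
    extremalLength_eq_two_div_energy hsym hnn hconn hS.to_set hT.to_set hS0 hT1
      fun _ hg0 hg1 => energy_le_of_laplacian_eq_zero hsym hnn hS0 hT1 hharm hg0 hg1
  rw [energy_eq_two_mul_sum_laplacian hsym hS0 hT1 hharm, div_mul_cancel_left₀ two_ne_zero,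
    inv_eq_one_div] at hext
  exact hext

/-- Duffin's theorem: in a finite connected network with disjoint nonempty vertex
sets `S`, `T`, the extremal length of the family of paths from `S` to `T`
equals the effective resistance between `S` and `T` (expressed as
`1/strength(c d h)` for a voltage `h` that is `0` on `S`, `1` on `T`, and
harmonic elsewhere, which coincides with the resistance in the network obtained
by identifying `S` and `T` to single vertices). -/
theorem stmt_8 {V : Type*} [Fintype V]
    (c : V → V → ℝ) (hsym : ∀ x y, c x y = c y x) (hnn : ∀ x y, 0 ≤ c x y)
    (hconn : ∀ x y : V, Relation.ReflTransGen (fun u v => 0 < c u v) x y)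
    (S T : Finset V) (hS : S.Nonempty) (hT : T.Nonempty) (hdisj : Disjoint S T)
    (h : V → ℝ) (hS0 : ∀ s ∈ S, h s = 0) (hT1 : ∀ t ∈ T, h t = 1)
    (hharm : ∀ x, x ∉ S → x ∉ T → ∑ y, c x y * (h y - h x) = 0) :
    sSup {q : ℝ | ∃ ρ : V → V → ℝ, (∀ x y, ρ x y = ρ y x) ∧ (∀ x y, 0 ≤ ρ x y) ∧
        (∀ x y, c x y = 0 → ρ x y = 0) ∧ ρ ≠ 0 ∧
        q = (sInf {l : ℝ | ∃ (m : ℕ) (γ : Fin (m+1) → V), γ 0 ∈ S ∧ γ (Fin.last m) ∈ T ∧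
              (∀ i : Fin m, 0 < c (γ i.castSucc) (γ i.succ)) ∧
              l = ∑ i : Fin m, ρ (γ i.castSucc) (γ i.succ)}) ^ 2
            / ((1/2) * ∑ x, ∑ y, c x y * ρ x y ^ 2)}
      = 1 / (∑ s ∈ S, ∑ y, c s y * (h y - h s)) :=
  stmt_8_general c hsym hnn hconn S T hS hT h hS0 hT1 hharm
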